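/- arXiv:2506.23337 — 5 statements merged into one kernel-verified Lean document; each statement's English description precedes it below -/
import Mathlib

section
/- For all real x > 0, ln(x) = x - 1 - ∑_{k=1}^∞ 2^(k-1)·(x^(2^(-k)) - 1)^2. -/
/-! Write `q p = p⁻¹ * (x ^ p - 1)`. Since `x ^ p = (x ^ (p / 2)) ^ 2`, the difference
`q p - q (p / 2) = p⁻¹ * (x ^ (p / 2) - 1) ^ 2` is a term of the series with `p = 2⁻ᵏ`, so the
partial sums telescope to `q 1 - q 2⁻ⁿ = x - 1 - q 2⁻ⁿ`, and `q p → log x` as `p → 0⁺`.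
The terms are nonnegative, so this limit of partial sums is a genuine (unconditional) sum. -/

open Filter Topology Real

theorem hasSum_sub_succ_of_antitone {f : ℕ → ℝ} {l : ℝ} (hf : Antitone f)
    (hl : Tendsto f atTop (𝓝 l)) : HasSum (fun n => f n - f (n + 1)) (f 0 - l) := by
  refine (hasSum_iff_tendsto_nat_of_nonneg (fun n => sub_nonneg.2 (hf n.le_succ)) _).2 ?_
  simp_rw [Finset.sum_range_sub']
  exact tendsto_const_nhds.sub hl

theorem inv_mul_rpow_sub_one_sub_half {x : ℝ} (hx : 0 ≤ x) (p : ℝ) :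
    p⁻¹ * (x ^ p - 1) - (p / 2)⁻¹ * (x ^ (p / 2) - 1) = p⁻¹ * (x ^ (p / 2) - 1) ^ 2 := by
  have hsq : x ^ p = (x ^ (p / 2)) ^ 2 := by
    rw [← rpow_natCast, ← rpow_mul hx]
    norm_num
  rw [hsq, inv_div, div_eq_mul_inv]
  ring

theorem log_ramanujan_bradley (x : ℝ) (hx : 0 < x) :
    Real.log x =
      x - 1 - ∑' k : ℕ, (2 : ℝ) ^ k * (x ^ ((2 : ℝ) ^ (-((k : ℝ) + 1))) - 1) ^ 2 := by
  set p : ℕ → ℝ := fun k => ((2 : ℝ) ^ k)⁻¹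
  set f : ℕ → ℝ := fun k => (p k)⁻¹ * (x ^ p k - 1)
  have hterm (k : ℕ) :
      (2 : ℝ) ^ k * (x ^ ((2 : ℝ) ^ (-((k : ℝ) + 1))) - 1) ^ 2 = f k - f (k + 1) := by
    have hp : p (k + 1) = p k / 2 := by simp only [p, pow_succ, mul_inv, div_eq_mul_inv]
    have hexp : (2 : ℝ) ^ (-((k : ℝ) + 1)) = p k / 2 := by
      rw [rpow_neg zero_le_two, ← Nat.cast_succ, rpow_natCast, ← hp]
    simp only [f]
    rw [hp, inv_mul_rpow_sub_one_sub_half hx.le, hexp, inv_inv]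
  have hanti : Antitone f :=
    antitone_nat_of_succ_le fun k => sub_nonneg.1 (hterm k ▸ by positivity)
  have hp : Tendsto p atTop (𝓝[>] 0) :=
    tendsto_inv_atTop_nhdsGT_zero.comp (tendsto_pow_atTop_atTop_of_one_lt one_lt_two)
  have hf : Tendsto f atTop (𝓝 (log x)) := (tendsto_rpow_sub_one_log hx).comp hp
  have hsum := (hasSum_sub_succ_of_antitone hanti hf).congr_fun hterm
  rw [hsum.tsum_eq]
  simp [f, p]
end

section
/- For all real x > 0 with x ≠ 1, 1/ln(x) + 1/(1-x) = ∑_{k=1}^∞ 1/(2^k·(1 + x^(2^(-k)))). -/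
/-!
With `y = x ^ h` one has `h / (y - 1) - 2h / (y² - 1) = h / (1 + y)`, so for `h = 2⁻ᵏ⁻¹` the
`k`-th term of the series is `F (2⁻ᵏ⁻¹) - F (2⁻ᵏ)` with `F h = h / (x ^ h - 1)`. The series
therefore telescopes to `lim_{h → 0} F h - F 1`, and `F h` is the reciprocal of the difference
quotient of `t ↦ x ^ t` at `0`, which tends to `1 / log x`.
-/

open Real Filter Finset Topology

theorem hasSum_sub_of_monotone_of_tendsto {F : ℕ → ℝ} {l : ℝ} (hF : Monotone F)
    (hl : Tendsto F atTop (𝓝 l)) : HasSum (fun n => F (n + 1) - F n) (l - F 0) := by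
  rw [hasSum_iff_tendsto_nat_of_nonneg fun n => sub_nonneg.2 (hF n.le_succ)]
  simpa only [sum_range_sub] using hl.sub_const (F 0)

namespace Real

variable {x : ℝ}

theorem rpow_ne_one_of_ne_zero (hx : 0 < x) (hx1 : x ≠ 1) {h : ℝ} (hh : h ≠ 0) : x ^ h ≠ 1 := by
  intro hxh
  apply hx1
  rw [← rpow_rpow_inv hx.le hh, hxh, one_rpow]

theorem div_rpow_sub_one_sub_two_mul (hx : 0 < x) (hx1 : x ≠ 1) {h : ℝ} (hh : h ≠ 0) :
    h / (x ^ h - 1) - 2 * h / (x ^ (2 * h) - 1) = h / (1 + x ^ h) := by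
  have hy : 0 < x ^ h := rpow_pos_of_pos hx h
  have hy1 : x ^ h - 1 ≠ 0 := sub_ne_zero.2 (rpow_ne_one_of_ne_zero hx hx1 hh)
  rw [two_mul h, rpow_add hx, show x ^ h * x ^ h - 1 = (x ^ h - 1) * (1 + x ^ h) by ring]
  field_simp
  ring

theorem tendsto_div_rpow_sub_one (hx : 0 < x) (hx1 : x ≠ 1) :
    Tendsto (fun h => h / (x ^ h - 1)) (𝓝[≠] 0) (𝓝 (log x)⁻¹) := by
  have hderiv : HasDerivAt (fun t : ℝ => x ^ t) (log x) 0 := by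
    simpa using (hasStrictDerivAt_const_rpow hx 0).hasDerivAt
  have hlog : log x ≠ 0 := log_ne_zero_of_pos_of_ne_one hx hx1
  refine ((hasDerivAt_iff_tendsto_slope.1 hderiv).inv₀ hlog).congr fun h => ?_
  rw [slope_def_field, rpow_zero, sub_zero, inv_div]

end Real

theorem tendsto_two_rpow_neg_natCast_nhdsNE :
    Tendsto (fun n : ℕ => (2 : ℝ) ^ (-(n : ℝ))) atTop (𝓝[≠] 0) := by
  refine tendsto_nhdsWithin_of_tendsto_nhds_of_eventually_within _ ?_
    (Eventually.of_forall fun n => (rpow_pos_of_pos two_pos _).ne')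
  simpa only [rpow_neg two_pos.le, rpow_natCast, Function.comp_def] using
    tendsto_inv_atTop_zero.comp (tendsto_pow_atTop_atTop_of_one_lt one_lt_two)

theorem ramanujan_log_formula (x : ℝ) (hx : 0 < x) (hx1 : x ≠ 1) :
    1 / Real.log x + 1 / (1 - x) =
      ∑' k : ℕ, 1 / ((2 : ℝ) ^ (k + 1) * (1 + x ^ ((2 : ℝ) ^ (-((k : ℝ) + 1))))) := by
  set step : ℕ → ℝ := fun n => (2 : ℝ) ^ (-(n : ℝ))
  set F : ℕ → ℝ := fun n => step n / (x ^ step n - 1)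
  have hstep : ∀ n, step n = 2 * step (n + 1) := fun n => by
    simp only [step, Nat.cast_succ, neg_add, rpow_add two_pos, rpow_neg_one]
    field_simp
  have hterm : ∀ k : ℕ, F (k + 1) - F k =
      1 / ((2 : ℝ) ^ (k + 1) * (1 + x ^ ((2 : ℝ) ^ (-((k : ℝ) + 1))))) := fun k => by
    have hpos : 0 < step (k + 1) := rpow_pos_of_pos two_pos _
    simp only [F, hstep k]
    rw [div_rpow_sub_one_sub_two_mul hx hx1 hpos.ne']
    simp only [step, rpow_neg two_pos.le, ← Nat.cast_succ, rpow_natCast]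
    field_simp
  have hF : Monotone F := monotone_nat_of_le_succ fun k => by
    rw [← sub_nonneg, hterm]
    have := rpow_pos_of_pos hx ((2 : ℝ) ^ (-((k : ℝ) + 1)))
    positivity
  have hlim : Tendsto F atTop (𝓝 (log x)⁻¹) :=
    (tendsto_div_rpow_sub_one hx hx1).comp tendsto_two_rpow_neg_natCast_nhdsNE
  have hF0 : F 0 = 1 / (x - 1) := by simp [F, step]
  have hsum := hasSum_sub_of_monotone_of_tendsto hF hlim
  simp only [hterm] at hsum
  rw [hsum.tsum_eq, hF0, one_div, ← neg_sub x 1, one_div_neg_eq_neg_one_div, ← sub_eq_add_neg]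
end

section
/- For all real x > 0 with x ≠ 1, ln(x) + 1 - x = (1-x)·ln(x)·∑_{k=1}^∞ 1/(2^k·(1 + x^(2^(-k)))). -/
open Real Filter Topology Finset

/-!
With `y = x ^ 2⁻⁽ᵏ⁺¹⁾`, the identity `1 / (2 (1 + y)) = 1 / (2 (y - 1)) - 1 / (y² - 1)` makes the
series telescope: its `n`-th partial sum is `1 / (2ⁿ (x ^ 2⁻ⁿ - 1)) - 1 / (x - 1)`. The quantity
`2ⁿ (x ^ 2⁻ⁿ - 1)` is a difference quotient of `t ↦ x ^ t` at `0`, so it tends to `log x`, and the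
series sums to `1 / log x - 1 / (x - 1)`.
-/

lemma one_div_two_mul_mul_one_add {K : Type*} [Field K] [NeZero (2 : K)] {a y : K} (ha : a ≠ 0)
    (hy : y ^ 2 ≠ 1) :
    1 / (2 * a * (1 + y)) = 1 / (2 * a * (y - 1)) - 1 / (a * (y ^ 2 - 1)) := by
  have hy1 : y - 1 ≠ 0 := fun h => hy (by linear_combination (y + 1) * h)
  have hy2 : 1 + y ≠ 0 := fun h => hy (by linear_combination (y - 1) * h)
  have hy3 : y ^ 2 - 1 ≠ 0 := sub_ne_zero.2 hy
  field_simp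
  ring

lemma Real.rpow_ne_one_of_ne_zero_s4 {x p : ℝ} (hx : 0 < x) (hx1 : x ≠ 1) (hp : p ≠ 0) :
    x ^ p ≠ 1 := by
  intro h
  have := Real.log_rpow hx p
  rw [h, log_one] at this
  exact mul_ne_zero hp (log_ne_zero_of_pos_of_ne_one hx hx1) this.symm

lemma two_rpow_neg_natCast (n : ℕ) : (2 : ℝ) ^ (-(n : ℝ)) = 2⁻¹ ^ n := by
  rw [rpow_neg zero_le_two, rpow_natCast, inv_pow]

lemma rpow_two_rpow_neg_succ_sq {x : ℝ} (hx : 0 ≤ x) (k : ℕ) :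
    (x ^ (2 : ℝ) ^ (-((k : ℝ) + 1))) ^ 2 = x ^ (2 : ℝ) ^ (-(k : ℝ)) := by
  rw [← rpow_natCast, ← rpow_mul hx, Nat.cast_ofNat, ← rpow_add_one two_ne_zero]
  ring_nf

noncomputable def dyadicSlope (x : ℝ) (n : ℕ) : ℝ :=
  2 ^ n * (x ^ (2 : ℝ) ^ (-(n : ℝ)) - 1)

lemma dyadicSlope_zero (x : ℝ) : dyadicSlope x 0 = x - 1 := by
  simp [dyadicSlope]

lemma tendsto_dyadicSlope {x : ℝ} (hx : 0 < x) :
    Tendsto (dyadicSlope x) atTop (𝓝 (log x)) := by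
  have hslope : Tendsto (slope (fun t : ℝ => x ^ t) 0) (𝓝[≠] 0) (𝓝 (log x)) := by
    simpa using hasDerivAt_iff_tendsto_slope.1 (hasStrictDerivAt_const_rpow hx 0).hasDerivAt
  have hstep : Tendsto (fun n : ℕ => (2 : ℝ) ^ (-(n : ℝ))) atTop (𝓝[≠] 0) := by
    simp_rw [two_rpow_neg_natCast]
    exact (tendsto_pow_atTop_nhdsWithin_zero_of_lt_one (by norm_num) (by norm_num)).mono_right
      (nhdsWithin_mono _ fun t ht => ne_of_gt ht)
  refine (hslope.comp hstep).congr fun n => ?_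
  simp [dyadicSlope, slope_def_field, div_eq_mul_inv, mul_comm]

lemma one_div_two_pow_succ_mul_one_add_rpow_eq_sub {x : ℝ} (hx : 0 < x) (hx1 : x ≠ 1) (k : ℕ) :
    1 / ((2 : ℝ) ^ (k + 1) * (1 + x ^ (2 : ℝ) ^ (-((k : ℝ) + 1)))) =
      (dyadicSlope x (k + 1))⁻¹ - (dyadicSlope x k)⁻¹ := by
  have hsq := rpow_two_rpow_neg_succ_sq hx.le k
  have hne : (x ^ (2 : ℝ) ^ (-((k : ℝ) + 1))) ^ 2 ≠ 1 :=
    hsq ▸ rpow_ne_one_of_ne_zero_s4 hx hx1 (by positivity)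
  rw [dyadicSlope, dyadicSlope, Nat.cast_succ, pow_succ' (2 : ℝ) k,
    one_div_two_mul_mul_one_add (by positivity) hne, hsq, one_div, one_div]

theorem hasSum_one_div_two_pow_succ_mul_one_add_rpow {x : ℝ} (hx : 0 < x) (hx1 : x ≠ 1) :
    HasSum (fun k : ℕ => 1 / ((2 : ℝ) ^ (k + 1) * (1 + x ^ (2 : ℝ) ^ (-((k : ℝ) + 1)))))
      ((log x)⁻¹ - (x - 1)⁻¹) := by
  refine (hasSum_iff_tendsto_nat_of_nonneg (fun k => by positivity) _).2 ?_
  simp_rw [one_div_two_pow_succ_mul_one_add_rpow_eq_sub hx hx1,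
    sum_range_sub (fun i => (dyadicSlope x i)⁻¹), dyadicSlope_zero]
  exact ((tendsto_dyadicSlope hx).inv₀ (log_ne_zero_of_pos_of_ne_one hx hx1)).sub_const _

theorem ramanujan_log_consequence (x : ℝ) (hx : 0 < x) (hx1 : x ≠ 1) :
    Real.log x + 1 - x =
      (1 - x) * Real.log x *
        ∑' k : ℕ, 1 / ((2 : ℝ) ^ (k + 1) * (1 + x ^ ((2 : ℝ) ^ (-((k : ℝ) + 1))))) := by
  rw [(hasSum_one_div_two_pow_succ_mul_one_add_rpow hx hx1).tsum_eq]
  have hlog := log_ne_zero_of_pos_of_ne_one hx hx1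
  have hxm1 : x - 1 ≠ 0 := sub_ne_zero.2 hx1
  field_simp
  ring
end

section
/- For a ∈ (0, 1/2), the triple cyclic integral ∫_0^1∫_0^1∫_0^1 |x₁-x₂|^{-a}|x₂-x₃|^{-a}|x₃-x₁|^{-a} dx₁dx₂dx₃ is finite. -/
/-! AM–GM for `XY, YZ, ZX` with `X = |x₁ - x₂| ^ (-a/2)`, `Y = |x₂ - x₃| ^ (-a/2)`,
`Z = |x₃ - x₁| ^ (-a/2)` bounds the integrand by the three cyclic rotations of the chain
`|x₁ - x₂| ^ (-b) * |x₂ - x₃| ^ (-b)` with `b = 3a/2 < 1`. The rotations have equal integrals,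
and integrating out one end of the chain and then the middle variable bounds it by the square of
`sup_x ∫₀¹ |x - y| ^ (-b) dy ≤ ∫₋₁¹ |t| ^ (-b) dt`, which is finite since `|t| ^ (-b)` is locally
integrable. -/

open MeasureTheory Set
open scoped ENNReal

theorem rpow_mul_rpow_mul_rpow_le {x y z : ℝ} (hx : 0 ≤ x) (hy : 0 ≤ y) (hz : 0 ≤ z) (s : ℝ) :
    x ^ (2 * s) * y ^ (2 * s) * z ^ (2 * s) ≤
      x ^ (3 * s) * y ^ (3 * s) + y ^ (3 * s) * z ^ (3 * s) + z ^ (3 * s) * x ^ (3 * s) := by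
  have hpow : ∀ {t : ℝ} (n : ℕ), 0 ≤ t → t ^ (n * s) = (t ^ s) ^ n := fun n ht => by
    rw [mul_comm, Real.rpow_mul_natCast ht]
  rw [← Nat.cast_ofNat (n := 2), ← Nat.cast_ofNat (n := 3), hpow 2 hx, hpow 2 hy, hpow 2 hz,
    hpow 3 hx, hpow 3 hy, hpow 3 hz]
  have hX := Real.rpow_nonneg hx s
  have hY := Real.rpow_nonneg hy s
  have hZ := Real.rpow_nonneg hz s
  set X := x ^ s
  set Y := y ^ s
  set Z := z ^ s
  -- `P³ + Q³ + R³ - 3PQR = (P + Q + R)((P - Q)² + (Q - R)² + (R - P)²) / 2` for `P = XY` etc.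
  nlinarith [mul_nonneg (mul_nonneg hX hY) hZ, mul_nonneg (mul_nonneg hX hY) (mul_nonneg hY hZ),
    mul_nonneg (add_nonneg (add_nonneg (mul_nonneg hX hY) (mul_nonneg hY hZ)) (mul_nonneg hZ hX))
      (add_nonneg (add_nonneg (sq_nonneg (X * Y - Y * Z)) (sq_nonneg (Y * Z - Z * X)))
        (sq_nonneg (Z * X - X * Y)))]

theorem setLIntegral_Icc_abs_rpow_neg_lt_top {b : ℝ} (hb : b < 1) :
    ∫⁻ t in Icc (-1 : ℝ) 1, ENNReal.ofReal (|t| ^ (-b)) < ∞ := by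
  have hloc : LocallyIntegrable (fun t : ℝ => |t| ^ (-b)) :=
    locallyIntegrable_of_norm_le_rpow (by simp) (C := 1) (α := b) (by simpa using hb)
      (Filter.Eventually.of_forall fun t => by
        simp [abs_of_nonneg (Real.rpow_nonneg (abs_nonneg t) _)])
      (continuous_abs.measurable.pow_const _).aestronglyMeasurable
  exact (hloc.integrableOn_isCompact isCompact_Icc).setLIntegral_lt_top

theorem setLIntegral_Ioo_abs_sub_rpow_le {x : ℝ} (hx : x ∈ Icc (0 : ℝ) 1) (b : ℝ) :
    ∫⁻ y in Ioo (0 : ℝ) 1, ENNReal.ofReal (|x - y| ^ (-b)) ≤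
      ∫⁻ t in Icc (-1 : ℝ) 1, ENNReal.ofReal (|t| ^ (-b)) := by
  have hshift := (measurePreserving_sub_right volume x).setLIntegral_comp_preimage
    (measurableSet_Icc (a := -1) (b := 1)) (f := fun t : ℝ => ENNReal.ofReal (|t| ^ (-b)))
    (by fun_prop)
  calc ∫⁻ y in Ioo (0 : ℝ) 1, ENNReal.ofReal (|x - y| ^ (-b))
      = ∫⁻ y in Ioo (0 : ℝ) 1, ENNReal.ofReal (|y - x| ^ (-b)) := by simp_rw [abs_sub_comm x]
    _ ≤ ∫⁻ y in (· - x) ⁻¹' Icc (-1 : ℝ) 1, ENNReal.ofReal (|y - x| ^ (-b)) :=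
        lintegral_mono_set fun y hy => by
          simp only [mem_preimage, mem_Icc]
          constructor <;> linarith [hx.1, hx.2, hy.1, hy.2]
    _ = _ := hshift

section Chains

variable {α : Type*} [MeasurableSpace α] {μ : Measure α} [SFinite μ]

theorem lintegral_prod_prod_comp_rotate (f : α × α × α → ℝ≥0∞) :
    ∫⁻ p, f (p.2.1, p.2.2, p.1) ∂μ.prod (μ.prod μ) = ∫⁻ p, f p ∂μ.prod (μ.prod μ) :=
  ((measurePreserving_prodAssoc μ μ μ).comp Measure.measurePreserving_swap).lintegral_comp_emb
    (MeasurableEquiv.prodComm.trans MeasurableEquiv.prodAssoc).measurableEmbedding f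

theorem lintegral_mul_chain_le {K : α → α → ℝ≥0∞} (hK : Measurable (Function.uncurry K))
    {C : ℝ≥0∞} (hC : ∀ᵐ x ∂μ, ∫⁻ y, K x y ∂μ ≤ C) :
    ∫⁻ p, K p.1 p.2.1 * K p.2.1 p.2.2 ∂μ.prod (μ.prod μ) ≤ μ univ * (C * C) := by
  have hKx : ∀ x, Measurable (K x) := fun x => hK.comp measurable_prodMk_left
  have hinner : ∀ᵐ x ∂μ, ∫⁻ q, K x q.1 * K q.1 q.2 ∂μ.prod μ ≤ C * C := by
    filter_upwards [hC] with x hx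
    calc ∫⁻ q, K x q.1 * K q.1 q.2 ∂μ.prod μ = ∫⁻ y, K x y * ∫⁻ z, K y z ∂μ ∂μ := by
          rw [lintegral_prod _ (by fun_prop)]
          exact lintegral_congr fun y => lintegral_const_mul (K x y) (hKx y)
      _ ≤ ∫⁻ y, K x y * C ∂μ := lintegral_mono_ae (hC.mono fun y hy => by gcongr)
      _ = (∫⁻ y, K x y ∂μ) * C := lintegral_mul_const _ (hKx x)
      _ ≤ C * C := by gcongr
  calc ∫⁻ p, K p.1 p.2.1 * K p.2.1 p.2.2 ∂μ.prod (μ.prod μ)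
      = ∫⁻ x, ∫⁻ q, K x q.1 * K q.1 q.2 ∂μ.prod μ ∂μ := lintegral_prod _ (by fun_prop)
    _ ≤ ∫⁻ _, C * C ∂μ := lintegral_mono_ae hinner
    _ = μ univ * (C * C) := by rw [lintegral_const, mul_comm]

theorem lintegral_mul_cycle_le {K : α → α → ℝ≥0∞} (hK : Measurable (Function.uncurry K))
    {C : ℝ≥0∞} (hC : ∀ᵐ x ∂μ, ∫⁻ y, K x y ∂μ ≤ C) :
    ∫⁻ p, (K p.1 p.2.1 * K p.2.1 p.2.2 + K p.2.1 p.2.2 * K p.2.2 p.1 +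
        K p.2.2 p.1 * K p.1 p.2.1) ∂μ.prod (μ.prod μ) ≤ 3 * (μ univ * (C * C)) := by
  set g : α × α × α → ℝ≥0∞ := fun p => K p.1 p.2.1 * K p.2.1 p.2.2
  have hrot : ∫⁻ p, g (p.2.1, p.2.2, p.1) ∂μ.prod (μ.prod μ) = ∫⁻ p, g p ∂μ.prod (μ.prod μ) :=
    lintegral_prod_prod_comp_rotate g
  have hrot2 : ∫⁻ p, g (p.2.2, p.1, p.2.1) ∂μ.prod (μ.prod μ) = ∫⁻ p, g p ∂μ.prod (μ.prod μ) :=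
    (lintegral_prod_prod_comp_rotate fun p => g (p.2.1, p.2.2, p.1)).trans hrot
  calc _ = ∫⁻ p, (g p + g (p.2.1, p.2.2, p.1) + g (p.2.2, p.1, p.2.1)) ∂μ.prod (μ.prod μ) := rfl
    _ = 3 * ∫⁻ p, g p ∂μ.prod (μ.prod μ) := by
        rw [lintegral_add_right _ (by fun_prop), lintegral_add_right _ (by fun_prop), hrot, hrot2]
        ring
    _ ≤ 3 * (μ univ * (C * C)) := by gcongr; exact lintegral_mul_chain_le hK hC

end Chains

theorem c_a3_finite (a : ℝ) (ha : a ∈ Set.Ioo (0:ℝ) (1/2)) :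
    (∫⁻ p in (Set.Ioo (0:ℝ) 1) ×ˢ ((Set.Ioo (0:ℝ) 1) ×ˢ (Set.Ioo (0:ℝ) 1)),
        ENNReal.ofReal (|p.1 - p.2.1| ^ (-a) * |p.2.1 - p.2.2| ^ (-a) *
          |p.2.2 - p.1| ^ (-a))) < ⊤ := by
  set μ := volume.restrict (Ioo (0 : ℝ) 1)
  set K : ℝ → ℝ → ℝ≥0∞ := fun x y => ENNReal.ofReal (|x - y| ^ (-(3 * a / 2)))
  set C := ∫⁻ t in Icc (-1 : ℝ) 1, ENNReal.ofReal (|t| ^ (-(3 * a / 2)))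
  have hμ : volume.restrict (Ioo (0 : ℝ) 1 ×ˢ (Ioo (0 : ℝ) 1 ×ˢ Ioo (0 : ℝ) 1)) =
      μ.prod (μ.prod μ) := by
    simp only [μ, Measure.volume_eq_prod, Measure.prod_restrict]
  have hpt : ∀ p : ℝ × ℝ × ℝ,
      ENNReal.ofReal (|p.1 - p.2.1| ^ (-a) * |p.2.1 - p.2.2| ^ (-a) * |p.2.2 - p.1| ^ (-a)) ≤
        K p.1 p.2.1 * K p.2.1 p.2.2 + K p.2.1 p.2.2 * K p.2.2 p.1 +
          K p.2.2 p.1 * K p.1 p.2.1 := fun p => by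
    have h := rpow_mul_rpow_mul_rpow_le (abs_nonneg (p.1 - p.2.1)) (abs_nonneg (p.2.1 - p.2.2))
      (abs_nonneg (p.2.2 - p.1)) (-a / 2)
    rw [show 2 * (-a / 2) = -a by ring, show 3 * (-a / 2) = -(3 * a / 2) by ring] at h
    simp only [K, ← ENNReal.ofReal_mul (Real.rpow_nonneg (abs_nonneg _) _)]
    exact (ENNReal.ofReal_le_ofReal h).trans
      (ENNReal.ofReal_add_le.trans (add_le_add_left ENNReal.ofReal_add_le _))
  have hC : ∀ᵐ x ∂μ, ∫⁻ y, K x y ∂μ ≤ C :=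
    (ae_restrict_mem measurableSet_Ioo).mono fun x hx =>
      setLIntegral_Ioo_abs_sub_rpow_le (Ioo_subset_Icc_self hx) _
  have hCfin : C < ∞ := setLIntegral_Icc_abs_rpow_neg_lt_top (by linarith [ha.2])
  rw [hμ]
  calc _ ≤ ∫⁻ p, (K p.1 p.2.1 * K p.2.1 p.2.2 + K p.2.1 p.2.2 * K p.2.2 p.1 +
          K p.2.2 p.1 * K p.1 p.2.1) ∂μ.prod (μ.prod μ) := lintegral_mono hpt
    _ ≤ 3 * (μ univ * (C * C)) := lintegral_mul_cycle_le (by fun_prop) hC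
    _ < ∞ := by simp [μ, ENNReal.mul_lt_top, hCfin]
end

section
/- For a ∈ (0,1), the Lamperti density p(x) = (sin(aπ)/π)·x^{a-1}/(1 + 2cos(aπ)·x^a + x^{2a}) on (0,∞) has quantile function Q(u) = (sin(u·aπ)/sin((1-u)·aπ))^{1/a}; that is, for every u ∈ (0,1), ∫_0^{Q(u)} p(x) dx = u. -/
open Real MeasureTheory intervalIntegral Set

lemma arctan_cot {ψ : ℝ} (h1 : 0 < ψ) (h2 : ψ < Real.pi) :
    Real.arctan (Real.cos ψ / Real.sin ψ) = Real.pi/2 - ψ := by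
  have h := Real.arctan_tan (x := Real.pi/2 - ψ) (by linarith) (by linarith)
  rwa [Real.tan_eq_sin_div_cos, Real.sin_pi_div_two_sub, Real.cos_pi_div_two_sub] at h

set_option maxHeartbeats 1000000 in
theorem lamperti_quantile (a : ℝ) (ha : a ∈ Set.Ioo (0:ℝ) 1) (u : ℝ) (hu : u ∈ Set.Ioo (0:ℝ) 1) :
    (∫ x in Set.Ioc (0:ℝ)
        ((Real.sin (u * a * Real.pi) / Real.sin ((1 - u) * a * Real.pi)) ^ (1 / a)),
      (Real.sin (a * Real.pi) / Real.pi) *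
        x ^ (a - 1) / (1 + 2 * Real.cos (a * Real.pi) * x ^ a + x ^ (2 * a))) = u := by
  obtain ⟨ha0, ha1⟩ := ha
  obtain ⟨hu0, hu1⟩ := hu
  have hπ := Real.pi_pos
  set s := Real.sin (a * Real.pi) with hs_def
  set c := Real.cos (a * Real.pi) with hc_def
  have hs : 0 < s := Real.sin_pos_of_pos_of_lt_pi (by positivity)
    (by nlinarith [mul_pos (show (0:ℝ) < 1 - a by linarith) hπ])
  have hsu : 0 < Real.sin (u * a * Real.pi) :=
    Real.sin_pos_of_pos_of_lt_pi (by positivity)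
    (by nlinarith [mul_pos (show (0:ℝ) < 1 - u * a by nlinarith) hπ])
  have hψ1 : 0 < (1 - u) * a * Real.pi :=
    mul_pos (mul_pos (by linarith) ha0) hπ
  have hψ2 : (1 - u) * a * Real.pi < Real.pi := by
    nlinarith [mul_pos (show (0:ℝ) < 1 - (1 - u) * a by nlinarith) hπ]
  have hsψ : 0 < Real.sin ((1 - u) * a * Real.pi) :=
    Real.sin_pos_of_pos_of_lt_pi hψ1 hψ2
  set Q : ℝ := (Real.sin (u * a * Real.pi) / Real.sin ((1 - u) * a * Real.pi)) ^ (1 / a)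
    with hQ_def
  have hQ : 0 < Q := Real.rpow_pos_of_pos (by positivity) _
  have hQa : Q ^ a = Real.sin (u * a * Real.pi) / Real.sin ((1 - u) * a * Real.pi) := by
    rw [hQ_def, ← Real.rpow_mul (by positivity : (0:ℝ) ≤ _), one_div,
      inv_mul_cancel₀ ha0.ne', Real.rpow_one]
  -- denominator positivity
  have hden : ∀ x : ℝ, 0 ≤ x → 0 < 1 + 2 * c * x ^ a + x ^ (2 * a) := by
    intro x hx
    have h2 : x ^ (2*a) = (x ^ a) ^ 2 := by
      rw [← Real.rpow_natCast (x ^ a) 2, ← Real.rpow_mul hx]; ring_nf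
    have hcs : c ^ 2 + s ^ 2 = 1 := by
      rw [hc_def, hs_def]; exact Real.cos_sq_add_sin_sq _
    nlinarith [sq_nonneg (x ^ a + c), hs]
  set F : ℝ → ℝ := fun x => (1/(a*Real.pi)) * Real.arctan ((x ^ a + c)/s) with hF_def
  have hcont_rpow : Continuous fun x : ℝ => x ^ a := by
    rw [continuous_iff_continuousAt]
    intro x
    exact Real.continuousAt_rpow_const x a (Or.inr ha0.le)
  have hFcont : Continuous F := by
    apply continuous_const.mul
    exact Real.continuous_arctan.comp ((hcont_rpow.add continuous_const).div_const s)
  have hderiv : ∀ x ∈ Set.Ioo (0:ℝ) Q, HasDerivWithinAt F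
      (s / Real.pi * x ^ (a - 1) / (1 + 2 * c * x ^ a + x ^ (2 * a))) (Set.Ioi x) x := by
    intro x hx
    have hx0 : 0 < x := hx.1
    have h1 : HasDerivAt (fun y : ℝ => y ^ a) (a * x ^ (a-1)) x :=
      Real.hasDerivAt_rpow_const (Or.inl hx0.ne')
    have h2 : HasDerivAt (fun y : ℝ => (y ^ a + c)/s) (a * x ^ (a-1)/s) x :=
      (h1.add_const c).div_const s
    have h3 : HasDerivAt F ((1/(a*Real.pi)) * ((1/(1+((x ^ a + c)/s)^2)) * (a * x ^ (a-1)/s))) x :=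
      ((Real.hasDerivAt_arctan _).comp x h2).const_mul _
    have heq : (1/(a*Real.pi)) * ((1/(1+((x ^ a + c)/s)^2)) * (a * x ^ (a-1)/s))
        = s / Real.pi * x ^ (a - 1) / (1 + 2 * c * x ^ a + x ^ (2 * a)) := by
      have h2a : x ^ (2*a) = (x ^ a) ^ 2 := by
        rw [← Real.rpow_natCast (x ^ a) 2, ← Real.rpow_mul hx0.le]; ring_nf
      have hd := hden x hx0.le
      have hcs : c ^ 2 + s ^ 2 = 1 := by
        rw [hc_def, hs_def]; exact Real.cos_sq_add_sin_sq _
      rw [h2a] at hd ⊢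
      have h1w : 1 + ((x ^ a + c)/s)^2 = (1 + 2*c*x^a + (x^a)^2)/s^2 := by
        field_simp
        nlinarith [hcs]
      rw [h1w]
      field_simp
    rw [← heq]
    exact h3.hasDerivWithinAt
  have hint : IntervalIntegrable
      (fun x => s / Real.pi * x ^ (a - 1) / (1 + 2 * c * x ^ a + x ^ (2 * a)))
      volume 0 Q := by
    have hf : IntervalIntegrable (fun x : ℝ => x ^ (a-1)) volume 0 Q :=
      intervalIntegrable_rpow' (by linarith)
    have hcont2 : Continuous fun x : ℝ => x ^ (2*a) := by
      rw [continuous_iff_continuousAt]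
      intro x
      exact Real.continuousAt_rpow_const x (2*a) (Or.inr (by linarith))
    have hdenc : Continuous fun x : ℝ => 1 + 2 * c * x ^ a + x ^ (2 * a) :=
      (continuous_const.add (continuous_const.mul hcont_rpow)).add hcont2
    have hg : ContinuousOn (fun x : ℝ => s / Real.pi / (1 + 2 * c * x ^ a + x ^ (2 * a)))
        (Set.uIcc 0 Q) := by
      apply ContinuousOn.div continuousOn_const hdenc.continuousOn
      intro x hx
      have hx0 : 0 ≤ x := by
        rcases Set.mem_uIcc.mp hx with h | h
        · exact h.1
        · linarith [h.1]
      exact (hden x hx0).ne'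
    have hmain := hf.continuousOn_mul hg
    have hfun : (fun x : ℝ => s / Real.pi * x ^ (a - 1) / (1 + 2 * c * x ^ a + x ^ (2 * a)))
        = fun x : ℝ => (s / Real.pi / (1 + 2 * c * x ^ a + x ^ (2 * a))) * x ^ (a - 1) := by
      funext x; ring
    rw [hfun]
    exact hmain
  have key : (∫ x in (0:ℝ)..Q,
      s / Real.pi * x ^ (a - 1) / (1 + 2 * c * x ^ a + x ^ (2 * a))) = F Q - F 0 :=
    intervalIntegral.integral_eq_sub_of_hasDeriv_right_of_le hQ.le
      (hFcont.continuousOn) hderiv hint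
  have hF0 : F 0 = (1/(a*Real.pi)) * (Real.pi/2 - a * Real.pi) := by
    have : (0:ℝ) ^ a = 0 := Real.zero_rpow ha0.ne'
    rw [hF_def]
    simp only [this, zero_add]
    rw [hc_def, hs_def, arctan_cot (by positivity) (by nlinarith)]
  have hFQ : F Q = (1/(a*Real.pi)) * (Real.pi/2 - (1-u) * a * Real.pi) := by
    have harg : (Q ^ a + c)/s
        = Real.cos ((1-u)*a*Real.pi) / Real.sin ((1-u)*a*Real.pi) := by
      rw [hQa]
      have hsin : Real.sin (u * a * Real.pi)
          = s * Real.cos ((1-u)*a*Real.pi) - c * Real.sin ((1-u)*a*Real.pi) := by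
        rw [hs_def, hc_def, ← Real.sin_sub]
        ring_nf
      rw [hsin]
      field_simp
      ring
    rw [hF_def]
    simp only [harg]
    rw [arctan_cot hψ1 hψ2]
  rw [← intervalIntegral.integral_of_le hQ.le]
  rw [key, hF0, hFQ]
  field_simp
  ring
end
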